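/- Every semi-connected Condorcet domain of maximal width on a finite set A is a peak-pit domain: for every triple {a,b,c} ⊆ A, there is x in the triple such that the restriction of the domain to the triple satisfies xN1 (x never top) or xN3 (x never bottom). -/

import Mathlib

/-! Linear orders on a finite set `A` are encoded as duplicate-free lists
(top alternative first) whose set of entries is `A`. -/

variable {α β : Type*}

/-- `w` is a (strict) linear order on `A`, written from top to bottom. -/
def IsLinOrd [DecidableEq α] (A : Finset α) (w : List α) : Prop :=
  w.Nodup ∧ w.toFinset = A

/-- Restriction of the order `w` to the set `B`. -/
def restr [DecidableEq α] (B : Finset α) (w : List α) : List α :=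
  w.filter (fun x => decide (x ∈ B))

/-- Strict majority relation of a profile `P` (a list of linear orders):
`a` beats `b` iff strictly more orders of `P` rank `a` above `b`. -/
def Maj [DecidableEq α] (P : List (List α)) (a b : α) : Prop :=
  P.countP (fun w => decide (w.idxOf a < w.idxOf b)) >
    P.countP (fun w => decide (w.idxOf b < w.idxOf a))

/-- `D` is a Condorcet domain on `A`: all members are linear orders on `A` and
the majority relation of every odd profile over `D` is transitive. -/
def IsCondorcet [DecidableEq α] (A : Finset α) (D : Set (List α)) : Prop :=
  (∀ w ∈ D, IsLinOrd A w) ∧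
    ∀ P : List (List α), (∀ w ∈ P, w ∈ D) → Odd P.length →
      ∀ a ∈ A, ∀ b ∈ A, ∀ c ∈ A, Maj P a b → Maj P b c → Maj P a c

/-- The never condition `x N_{a,b,c} i` (1-based position `i`): no order of `D`
restricted to `{a,b,c}` has `x` in the `i`-th position. -/
def Never [DecidableEq α] (D : Set (List α)) (a b c x : α) (i : ℕ) : Prop :=
  ∀ w ∈ D, (restr {a, b, c} w)[i - 1]? ≠ some x

/-- `D` is a peak-pit domain on `A`: every triple satisfies a never-top or a
never-bottom condition. -/
def PeakPit [DecidableEq α] (A : Finset α) (D : Set (List α)) : Prop :=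
  ∀ a ∈ A, ∀ b ∈ A, ∀ c ∈ A, a ≠ b → a ≠ c → b ≠ c →
    ∃ x ∈ ({a, b, c} : Finset α), Never D a b c x 1 ∨ Never D a b c x 3

/-- Concatenation `D1 ⊙ D2` of two domains (all of `A` ranked above all of `B`). -/
def concatDom (D1 D2 : Set (List α)) : Set (List α) :=
  {w | ∃ x ∈ D1, ∃ y ∈ D2, w = x ++ y}

/-- The set `u ⊕ v` of all shuffles of `u ∈ L(A)` and `v ∈ L(B)`. -/
def shuffles [DecidableEq α] (A B : Finset α) (u v : List α) : Set (List α) :=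
  {w | IsLinOrd (A ∪ B) w ∧ restr A w = u ∧ restr B w = v}

/-- The tensor product `(D1 ⊗ D2)(u,v)` of Danilov–Karzanov–Koshevoy. -/
def tensor [DecidableEq α] (A B : Finset α) (D1 D2 : Set (List α))
    (u v : List α) : Set (List α) :=
  concatDom D1 D2 ∪ shuffles A B u v

/-- `D` has maximal width: it contains a pair of completely reversed orders. -/
def MaxWidth (D : Set (List α)) : Prop :=
  ∃ w ∈ D, w.reverse ∈ D

/-- `w'` is obtained from `w` by one swap of adjacent alternatives. -/
def AdjSwap (w w' : List α) : Prop :=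
  ∃ (l r : List α) (x y : α), w = l ++ x :: y :: r ∧ w' = l ++ y :: x :: r

/-- `D` is semi-connected: some order `w ∈ D` is joined to its reverse by a path
inside `D` of adjacent transpositions in which each pair of alternatives is
swapped exactly once (a maximal chain in the weak Bruhat order, of length
`C(|A|,2)`). -/
def SemiConnected (A : Finset α) (D : Set (List α)) : Prop :=
  ∃ (w : List α) (c : ℕ → List α), w ∈ D ∧ c 0 = w ∧
    c (A.card.choose 2) = w.reverse ∧
    (∀ i, i ≤ A.card.choose 2 → c i ∈ D) ∧
    (∀ i, i < A.card.choose 2 → AdjSwap (c i) (c (i + 1)))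

/-- `D` is a maximal Condorcet domain on `A`. -/
def MaxCondorcet [DecidableEq α] (A : Finset α) (D : Set (List α)) : Prop :=
  IsCondorcet A D ∧ ∀ D' : Set (List α), IsCondorcet A D' → D ⊆ D' → D' ⊆ D

/-- Cardinality of the Fishburn domain `F_n` (Galambos–Reiner formula). -/
def fishCard (n : ℕ) : ℕ :=
  (n + 3) * 2 ^ (n - 3) -
    (if Even n then (2 * n - 3) * (n - 2).choose (n / 2 - 1) / 2
     else (n - 1) / 2 * (n - 1).choose ((n - 1) / 2))

/-
Fix a triple `T = {a, b, c}`. Along the maximal chain from `w` to `w.reverse`, the position of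
an alternative `x` in the restriction to `T` moves by at most one per adjacent swap and goes from
`p` to `2 - p`, so some order of `D` ranks `x` in the middle of `T`. If `T` satisfied neither a
never-top nor a never-bottom condition, every alternative would therefore occupy every position
of `T`. Since each rotation of `abc` agrees with each rotation of `acb` in exactly one position,
the restrictions to `T` then contain all three rotations of `abc` or all three rotations of
`acb`. Three such orders form a profile whose majority relation is the cycle `a > b > c > a`,
contradicting the Condorcet property.
-/

theorem Nat.exists_eq_of_mem_uIcc_of_step_le_one {f : ℕ → ℕ} {n k : ℕ}
    (hstep : ∀ i < n, f (i + 1) ≤ f i + 1 ∧ f i ≤ f (i + 1) + 1)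
    (hk : k ∈ Set.uIcc (f 0) (f n)) : ∃ i ≤ n, f i = k := by
  induction n with
  | zero => exact ⟨0, le_rfl, (by simpa using hk : k = f 0).symm⟩
  | succ n ih =>
    by_cases hkn : k ∈ Set.uIcc (f 0) (f n)
    · obtain ⟨i, hi, rfl⟩ := ih (fun i hi => hstep i (by omega)) hkn
      exact ⟨i, by omega, rfl⟩
    · refine ⟨n + 1, le_rfl, ?_⟩
      simp only [Set.mem_uIcc] at hk hkn
      have := hstep n (by omega)
      omega

namespace List

variable [DecidableEq α]

theorem idxOf_reverse_add_idxOf {l : List α} (hl : l.Nodup) {x : α}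
    (hx : x ∈ l) : l.reverse.idxOf x + l.idxOf x + 1 = l.length := by
  induction l with
  | nil => simp at hx
  | cons y t ih =>
    rw [nodup_cons] at hl
    rw [reverse_cons]
    by_cases hxy : y = x
    · subst hxy
      rw [idxOf_append_of_notMem (by simpa using hl.1)]
      simp
    · have hxt : x ∈ t := by simpa [Ne.symm hxy] using hx
      rw [idxOf_append_of_mem (by simpa using hxt), idxOf_cons_ne _ hxy,
        length_cons, ← ih hl.2 hxt]
      omega

theorem Nodup.idxOf_lt_idxOf_of_sublist {w : List α} (hw : w.Nodup)
    {u v : α} (h : [u, v] <+ w) : w.idxOf u < w.idxOf v := by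
  induction w with
  | nil => simp at h
  | cons y t ih =>
    rw [nodup_cons] at hw
    rcases sublist_cons_iff.1 h with h | ⟨r, hr, h⟩
    · have hu : y ≠ u := fun e => hw.1 (e ▸ h.subset (by simp))
      have hv : y ≠ v := fun e => hw.1 (e ▸ h.subset (by simp))
      rw [idxOf_cons_ne _ hu, idxOf_cons_ne _ hv]
      exact Nat.succ_lt_succ (ih hw.2 h)
    · obtain ⟨rfl, rfl⟩ : u = y ∧ [v] = r := by simpa using hr
      have huv : u ≠ v := fun e => hw.1 (e ▸ by simpa using h)
      rw [idxOf_cons_self, idxOf_cons_ne _ huv]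
      exact Nat.succ_pos _

end List

theorem AdjSwap.symm {w w' : List α} (h : AdjSwap w w') : AdjSwap w' w := by
  obtain ⟨l, r, x, y, rfl, rfl⟩ := h
  exact ⟨l, r, y, x, rfl, rfl⟩

theorem AdjSwap.filter {w w' : List α} (h : AdjSwap w w') (p : α → Bool) :
    w.filter p = w'.filter p ∨ AdjSwap (w.filter p) (w'.filter p) := by
  obtain ⟨l, r, x, y, rfl, rfl⟩ := h
  rcases hx : p x <;> rcases hy : p y
  case true.true => exact .inr ⟨l.filter p, r.filter p, x, y, by simp [hx, hy], by simp [hx, hy]⟩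
  all_goals exact .inl (by simp [hx, hy])

theorem AdjSwap.idxOf_le [DecidableEq α] {w w' : List α} (h : AdjSwap w w') (z : α) :
    w'.idxOf z ≤ w.idxOf z + 1 := by
  obtain ⟨l, r, x, y, rfl, rfl⟩ := h
  by_cases hz : z ∈ l
  · simp [List.idxOf_append_of_mem hz]
  · simp only [List.idxOf_append_of_notMem hz, List.idxOf_cons]
    cases y == z <;> cases x == z <;> simp only [cond_true, cond_false] <;> omega

theorem AdjSwap.idxOf_filter_le [DecidableEq α] {w w' : List α} (h : AdjSwap w w')
    (p : α → Bool) (z : α) : (w'.filter p).idxOf z ≤ (w.filter p).idxOf z + 1 := by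
  rcases h.filter p with heq | hswap
  · rw [heq]; omega
  · exact hswap.idxOf_le z

section Restriction

variable [DecidableEq α]

theorem IsLinOrd.restr_of_subset {A B : Finset α} {w : List α} (h : IsLinOrd A w)
    (hBA : B ⊆ A) : IsLinOrd B (restr B w) := by
  refine ⟨h.1.filter _, ?_⟩
  ext x
  simp only [restr, List.mem_toFinset, List.mem_filter, decide_eq_true_eq, and_iff_right_iff_imp]
  intro hx
  simpa [← h.2] using hBA hx

theorem IsLinOrd.perm {B : Finset α} {l l' : List α} (h : IsLinOrd B l) (h' : IsLinOrd B l') :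
    l.Perm l' :=
  List.perm_of_nodup_nodup_toFinset_eq h.1 h'.1 (h.2.trans h'.2.symm)

theorem SemiConnected.exists_restr_getElem?_eq {A B : Finset α} {D : Set (List α)}
    (hS : SemiConnected A D) (hlin : ∀ w ∈ D, IsLinOrd A w) (hBA : B ⊆ A) {x : α} (hx : x ∈ B)
    {k : ℕ} (hk : 2 * k + 1 = B.card) : ∃ w ∈ D, (restr B w)[k]? = some x := by
  obtain ⟨w, c, hw, hc0, hcN, hcD, hcadj⟩ := hS
  set f : ℕ → ℕ := fun i => (restr B (c i)).idxOf x
  have hstep : ∀ i < A.card.choose 2, f (i + 1) ≤ f i + 1 ∧ f i ≤ f (i + 1) + 1 := fun i hi =>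
    ⟨(hcadj i hi).idxOf_filter_le _ x, (hcadj i hi).symm.idxOf_filter_le _ x⟩
  have hends : f 0 + f (A.card.choose 2) = 2 * k := by
    have hlw := (hlin w hw).restr_of_subset hBA
    have hxw : x ∈ restr B w := by simpa [← List.mem_toFinset, hlw.2] using hx
    have hrev := List.idxOf_reverse_add_idxOf hlw.1 hxw
    rw [← List.toFinset_card_of_nodup hlw.1, hlw.2] at hrev
    simp only [f, hc0, hcN, restr, List.filter_reverse] at hrev ⊢
    omega
  obtain ⟨i, hi, hfi⟩ := Nat.exists_eq_of_mem_uIcc_of_step_le_one (k := k) hstep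
    (by rw [Set.mem_uIcc]; omega)
  refine ⟨c i, hcD i hi, hfi ▸ List.getElem?_idxOf ?_⟩
  simpa [← List.mem_toFinset, ((hlin _ (hcD i hi)).restr_of_subset hBA).2] using hx

end Restriction

theorem cyclic_or_anticyclic_of_forall_getElem? {a b c : α}
    (hab : a ≠ b) (hac : a ≠ c) (hbc : b ≠ c) {S : Set (List α)} (hS : ∀ l ∈ S, l.Perm [a, b, c])
    (hcov : ∀ x ∈ [a, b, c], ∀ i < 3, ∃ l ∈ S, l[i]? = some x) :
    ([a, b, c] ∈ S ∧ [b, c, a] ∈ S ∧ [c, a, b] ∈ S) ∨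
      ([a, c, b] ∈ S ∧ [c, b, a] ∈ S ∧ [b, a, c] ∈ S) := by
  have hcov' : ∀ x ∈ [a, b, c], ∀ i < 3, ∃ l ∈ [a, b, c].permutations, l ∈ S ∧ l[i]? = some x :=
    fun x hx i hi =>
      let ⟨l, hl, e⟩ := hcov x hx i hi
      ⟨l, List.mem_permutations.2 (hS l hl), hl, e⟩
  simp only [Nat.forall_lt_succ_right, Nat.not_lt_zero, IsEmpty.forall_iff] at hcov'
  simp [List.permutations, hab, hac, hbc, hab.symm, hac.symm, hbc.symm] at hcov'
  tauto

section Majority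

open List

variable [DecidableEq α]

theorem Maj.of_perm {P Q : List (List α)} (h : P.Perm Q) {a b : α} (hP : Maj P a b) :
    Maj Q a b := by
  unfold Maj at hP ⊢
  rwa [← h.countP_eq, ← h.countP_eq]

theorem Maj.not_maj {P : List (List α)} {a b : α} (h : Maj P a b) : ¬ Maj P b a := by
  unfold Maj at h ⊢
  omega

theorem maj_of_cyclic {w₁ w₂ w₃ : List α} (h₁ : w₁.Nodup) (h₂ : w₂.Nodup) (h₃ : w₃.Nodup)
    {a b c : α} (s₁ : [a, b, c] <+ w₁) (s₂ : [b, c, a] <+ w₂) (s₃ : [c, a, b] <+ w₃) :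
    Maj [w₁, w₂, w₃] a b := by
  have r₁ := h₁.idxOf_lt_idxOf_of_sublist ((by simp : [a, b] <+ [a, b, c]).trans s₁)
  have r₂ := h₂.idxOf_lt_idxOf_of_sublist ((by simp : [b, a] <+ [b, c, a]).trans s₂)
  have r₃ := h₃.idxOf_lt_idxOf_of_sublist ((by simp : [a, b] <+ [c, a, b]).trans s₃)
  simp [Maj, r₁, r₂, r₃, r₁.not_gt, r₂.not_gt, r₃.not_gt]

theorem IsCondorcet.not_cyclic {A : Finset α} {D : Set (List α)} (hC : IsCondorcet A D)
    {a b c : α} (ha : a ∈ A) (hb : b ∈ A) (hc : c ∈ A) {w₁ w₂ w₃ : List α}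
    (h₁ : w₁ ∈ D) (h₂ : w₂ ∈ D) (h₃ : w₃ ∈ D)
    (s₁ : [a, b, c] <+ w₁) (s₂ : [b, c, a] <+ w₂) (s₃ : [c, a, b] <+ w₃) : False := by
  have n₁ := (hC.1 w₁ h₁).1
  have n₂ := (hC.1 w₂ h₂).1
  have n₃ := (hC.1 w₃ h₃).1
  have hab : Maj [w₁, w₂, w₃] a b := maj_of_cyclic n₁ n₂ n₃ s₁ s₂ s₃
  have hbc : Maj [w₁, w₂, w₃] b c :=
    (maj_of_cyclic n₂ n₃ n₁ s₂ s₃ s₁).of_perm (List.perm_append_singleton _ _)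
  have hca : Maj [w₁, w₂, w₃] c a :=
    (maj_of_cyclic n₃ n₁ n₂ s₃ s₁ s₂).of_perm (List.perm_append_singleton _ _).symm
  have hPD : ∀ w ∈ [w₁, w₂, w₃], w ∈ D := by simp [h₁, h₂, h₃]
  exact (hC.2 _ hPD ⟨1, rfl⟩ a ha b hb c hc hab hbc).not_maj hca

end Majority

theorem stmt_12_general [DecidableEq α] (A : Finset α) (D : Set (List α))
    (hC : IsCondorcet A D) (hS : SemiConnected A D) :
    PeakPit A D := by
  intro a ha b hb c hc hab hac hbc
  by_contra! hnot
  set T : Finset α := {a, b, c} with hT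
  have hTA : T ⊆ A := by simp [hT, Finset.insert_subset_iff, ha, hb, hc]
  have hperm : ∀ l ∈ restr T '' D, l.Perm [a, b, c] := by
    rintro _ ⟨w, hw, rfl⟩
    exact ((hC.1 w hw).restr_of_subset hTA).perm ⟨by simp [hab, hac, hbc], by simp [hT]⟩
  have hcov : ∀ x ∈ [a, b, c], ∀ i < 3, ∃ l ∈ restr T '' D, l[i]? = some x := by
    intro x hx i hi
    have hxT : x ∈ T := by simpa [hT] using hx
    interval_cases i
    · simpa [Never] using (hnot x hxT).1
    · obtain ⟨w, hw, hmid⟩ := hS.exists_restr_getElem?_eq hC.1 hTA hxT (k := 1)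
        (by simp [hT, hab, hac, hbc])
      exact ⟨_, ⟨w, hw, rfl⟩, hmid⟩
    · simpa [Never] using (hnot x hxT).2
  have hsub {w l : List α} (e : restr T w = l) : l.Sublist w := e ▸ List.filter_sublist
  rcases cyclic_or_anticyclic_of_forall_getElem? hab hac hbc hperm hcov with
    ⟨⟨w₁, h₁, e₁⟩, ⟨w₂, h₂, e₂⟩, ⟨w₃, h₃, e₃⟩⟩ | ⟨⟨w₁, h₁, e₁⟩, ⟨w₂, h₂, e₂⟩, ⟨w₃, h₃, e₃⟩⟩
  · exact hC.not_cyclic ha hb hc h₁ h₂ h₃ (hsub e₁) (hsub e₂) (hsub e₃)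
  · exact hC.not_cyclic ha hc hb h₁ h₂ h₃ (hsub e₁) (hsub e₂) (hsub e₃)

/-- every semi-connected Condorcet domain of maximal width is a
peak-pit domain. -/
theorem stmt_12 [DecidableEq α] (A : Finset α) (D : Set (List α))
    (hC : IsCondorcet A D) (hW : MaxWidth D) (hS : SemiConnected A D) :
    PeakPit A D :=
  stmt_12_general A D hC hS
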